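/- arXiv:1712.03371 — 5 statements merged into one kernel-verified Lean document; each statement's English description precedes it below -/
import Mathlib

section
/- Let F take nonnegative values c_1,...,c_K with probabilities q_1,...,q_K (summing to 1). Fix α ∈ (0,1) and construct F' taking values c_1,...,c_K, 0 with probabilities (1-α)q_1,...,(1-α)q_K, α. Then CVaR_α[F'] = E[F] = Σ_k q_k c_k. -/
noncomputable def CVaR (K : ℕ) (α : ℝ) (b p : Fin K → ℝ) : ℝ :=
  sSup {x : ℝ | ∃ r : Fin K → ℝ, (∑ k, r k) = 1 ∧
    (∀ k, 0 ≤ r k ∧ r k ≤ p k / (1 - α)) ∧ x = ∑ k, b k * r k}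

/-- Adding a zero-cost scenario with probability `α` and scaling the remaining
probabilities by `1-α` turns `CVaR_α` into the expectation. -/
theorem stmt8 (K : ℕ) (α : ℝ) (hα : 0 < α ∧ α < 1)
    (c q : Fin K → ℝ) (hc : ∀ k, 0 ≤ c k) (hq : ∀ k, 0 < q k)
    (hsum : (∑ k, q k) = 1) :
    CVaR (K + 1) α
      (fun i => if h : (i : ℕ) < K then c ⟨i, h⟩ else 0)
      (fun i => if h : (i : ℕ) < K then (1 - α) * q ⟨i, h⟩ else α)
      = ∑ k, q k * c k := by
  obtain ⟨hα0, hα1⟩ := hα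
  have h1α : (0:ℝ) < 1 - α := by linarith
  apply IsGreatest.csSup_eq
  constructor
  · refine ⟨fun i => if h : (i:ℕ) < K then q ⟨i, h⟩ else 0, ?_, ?_, ?_⟩
    · rw [Fin.sum_univ_castSucc]
      simpa using hsum
    · intro k
      by_cases h : (k:ℕ) < K
      · simp only [h, dif_pos]
        constructor
        · exact (hq _).le
        · rw [mul_comm, mul_div_assoc, div_self h1α.ne', mul_one]
      · simp only [h, dif_neg]
        constructor
        · rfl
        · positivity
    · rw [Fin.sum_univ_castSucc]
      simp [mul_comm]
  · rintro x ⟨r, hr1, hr2, rfl⟩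
    rw [Fin.sum_univ_castSucc]
    simp only [Fin.coe_castSucc, Fin.is_lt, dif_pos, Fin.val_last,
      lt_irrefl, dite_false, dif_neg, zero_mul, add_zero, Fin.eta, Nat.lt_irrefl]
    apply Finset.sum_le_sum
    intro k _
    rw [mul_comm (q k) (c k)]
    apply mul_le_mul_of_nonneg_left _ (hc k)
    have h2 := (hr2 k.castSucc).2
    simp only [Fin.coe_castSucc, Fin.is_lt, dif_pos, Fin.eta] at h2
    rw [mul_comm, mul_div_assoc, div_self h1α.ne', mul_one] at h2
    exact h2
end

section
/- Suppose an algorithm A for a minimization problem returns, for every instance, a solution π̂ with E[F(π̂)] ≤ σ · min_π E[F(π)] for some σ ≥ 1, where F(π) is a nonnegative discrete random cost over K scenarios with fixed probabilities p_1,...,p_K. Then for every α ∈ [0,1), the same solution π̂ satisfies CVaR_α[F(π̂)] ≤ σ · min{1/Pr_min, 1/(1-α)} · min_π CVaR_α[F(π)], where Pr_min = min_k p_k. -/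
section aux
variable {K : ℕ} {α : ℝ} {p : Fin K → ℝ}

lemma p_feasible (hα : 0 ≤ α ∧ α < 1) (hp : ∀ k, 0 < p k) :
    ∀ k, 0 ≤ p k ∧ p k ≤ p k / (1 - α) := by
  intro k
  have h1 : (0:ℝ) < 1 - α := by linarith [hα.2]
  refine ⟨(hp k).le, ?_⟩
  rw [le_div_iff₀ h1]
  nlinarith [(hp k).le, hα.1]

lemma E_le_CVaR (hα : 0 ≤ α ∧ α < 1) (hp : ∀ k, 0 < p k) (hsum : (∑ k, p k) = 1)
    (b : Fin K → ℝ) (hb : ∀ k, 0 ≤ b k) (Prmin : ℝ) (hmin : IsLeast (Set.range p) Prmin) :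
    (∑ k, p k * b k) ≤ CVaR K α b p := by
  have h1 : (0:ℝ) < 1 - α := by linarith [hα.2]
  have hPr : 0 < Prmin := by
    obtain ⟨k, hk⟩ := hmin.1
    exact hk ▸ hp k
  -- bddAbove
  have hbdd : BddAbove {x : ℝ | ∃ r : Fin K → ℝ, (∑ k, r k) = 1 ∧
      (∀ k, 0 ≤ r k ∧ r k ≤ p k / (1 - α)) ∧ x = ∑ k, b k * r k} := by
    refine ⟨∑ k, b k * (p k / (1 - α)), ?_⟩
    rintro x ⟨r, hr1, hr2, rfl⟩
    exact Finset.sum_le_sum fun k _ => mul_le_mul_of_nonneg_left (hr2 k).2 (hb k)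
  apply le_csSup hbdd
  refine ⟨p, hsum, p_feasible hα hp, ?_⟩
  simp [mul_comm]

lemma CVaR_le_min (hα : 0 ≤ α ∧ α < 1) (hp : ∀ k, 0 < p k) (hsum : (∑ k, p k) = 1)
    (b : Fin K → ℝ) (hb : ∀ k, 0 ≤ b k) (Prmin : ℝ) (hmin : IsLeast (Set.range p) Prmin) :
    CVaR K α b p ≤ min (1 / Prmin) (1 / (1 - α)) * (∑ k, p k * b k) := by
  have h1 : (0:ℝ) < 1 - α := by linarith [hα.2]
  have hPr : 0 < Prmin := by
    obtain ⟨k, hk⟩ := hmin.1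
    exact hk ▸ hp k
  apply csSup_le
  · exact ⟨∑ k, b k * p k, p, hsum, p_feasible hα hp, rfl⟩
  rintro x ⟨r, hr1, hr2, rfl⟩
  have hE0 : 0 ≤ ∑ k, p k * b k :=
    Finset.sum_nonneg fun k _ => mul_nonneg (hp k).le (hb k)
  rw [min_mul_of_nonneg _ _ hE0, le_min_iff]
  constructor
  · -- each r k ≤ 1 ≤ p k / Prmin
    rw [Finset.mul_sum]
    refine Finset.sum_le_sum fun k _ => ?_
    have hrk1 : r k ≤ 1 := by
      calc r k ≤ ∑ j, r j := Finset.single_le_sum (fun j _ => (hr2 j).1) (Finset.mem_univ k)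
        _ = 1 := hr1
    have : r k ≤ p k / Prmin := hrk1.trans (by rw [le_div_iff₀ hPr]; simpa using hmin.2 ⟨k, rfl⟩)
    calc b k * r k ≤ b k * (p k / Prmin) := mul_le_mul_of_nonneg_left this (hb k)
      _ = 1 / Prmin * (p k * b k) := by ring
  · rw [Finset.mul_sum]
    refine Finset.sum_le_sum fun k _ => ?_
    calc b k * r k ≤ b k * (p k / (1 - α)) := mul_le_mul_of_nonneg_left (hr2 k).2 (hb k)
      _ = 1 / (1 - α) * (p k * b k) := by ring

end aux

/-- A `σ`-approximation for the expected cost is a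
`σ · min{1/Pr_min, 1/(1-α)}`-approximation for `CVaR_α`. -/
theorem stmt11 (S : Type) [Fintype S] [Nonempty S] (K : ℕ) (hK : 0 < K)
    (α : ℝ) (hα : 0 ≤ α ∧ α < 1) (p : Fin K → ℝ) (hp : ∀ k, 0 < p k)
    (hsum : (∑ k, p k) = 1) (f : S → Fin K → ℝ) (hf : ∀ π k, 0 ≤ f π k)
    (Prmin : ℝ) (hmin : IsLeast (Set.range p) Prmin)
    (σ : ℝ) (hσ : 1 ≤ σ) (pihat : S)
    (hA : (∑ k, p k * f pihat k) ≤ σ * ⨅ π : S, ∑ k, p k * f π k) :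
    CVaR K α (f pihat) p ≤
      σ * min (1 / Prmin) (1 / (1 - α)) * ⨅ π : S, CVaR K α (f π) p := by
  have h1 : (0:ℝ) < 1 - α := by linarith [hα.2]
  have hPr : 0 < Prmin := by
    obtain ⟨k, hk⟩ := hmin.1
    exact hk ▸ hp k
  set C := min (1 / Prmin) (1 / (1 - α)) with hC
  have hC0 : 0 ≤ C := le_min (by positivity) (by positivity)
  have step1 : CVaR K α (f pihat) p ≤ C * (∑ k, p k * f pihat k) :=
    CVaR_le_min hα hp hsum _ (hf pihat) Prmin hmin
  have step3 : (⨅ π : S, ∑ k, p k * f π k) ≤ ⨅ π : S, CVaR K α (f π) p := by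
    apply le_ciInf
    intro π
    refine le_trans (ciInf_le (Finite.bddBelow_range _) π) ?_
    exact E_le_CVaR hα hp hsum _ (hf π) Prmin hmin
  calc CVaR K α (f pihat) p ≤ C * (∑ k, p k * f pihat k) := step1
    _ ≤ C * (σ * ⨅ π : S, ∑ k, p k * f π k) := mul_le_mul_of_nonneg_left hA hC0
    _ ≤ C * (σ * ⨅ π : S, CVaR K α (f π) p) := by
        apply mul_le_mul_of_nonneg_left _ hC0
        exact mul_le_mul_of_nonneg_left step3 (by linarith)
    _ = σ * C * ⨅ π : S, CVaR K α (f π) p := by ring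
end

section
/- Let C*_1 ≤ C*_2 ≤ ... ≤ C*_n be nonnegative rationals and p_1,...,p_n ≥ 0 such that for every j, Σ_{i=1}^{j} p_i C*_i ≥ (1/2)(Σ_{i=1}^{j} p_i)². Then for every j, the prefix sum C_j := Σ_{i=1}^{j} p_i satisfies C_j ≤ 2 C*_j. -/
theorem stmt12 (n : ℕ) (Cstar p : Fin n → ℚ)
    (hC : ∀ i, 0 ≤ Cstar i) (hp : ∀ i, 0 ≤ p i)
    (hmono : Monotone Cstar)
    (hineq : ∀ j : Fin n,
      (1 / 2) * (∑ i ∈ Finset.univ.filter (· ≤ j), p i) ^ 2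
        ≤ ∑ i ∈ Finset.univ.filter (· ≤ j), p i * Cstar i) :
    ∀ j : Fin n, (∑ i ∈ Finset.univ.filter (· ≤ j), p i) ≤ 2 * Cstar j := by
  intro j
  set S := ∑ i ∈ Finset.univ.filter (· ≤ j), p i with hS
  have hSnn : 0 ≤ S := Finset.sum_nonneg fun i _ => hp i
  have hbound : ∑ i ∈ Finset.univ.filter (· ≤ j), p i * Cstar i ≤ S * Cstar j := by
    rw [hS, Finset.sum_mul]
    apply Finset.sum_le_sum
    intro i hi
    simp only [Finset.mem_filter] at hi
    exact mul_le_mul_of_nonneg_left (hmono hi.2) (hp i)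
  have key : (1 / 2) * S ^ 2 ≤ S * Cstar j := le_trans (hineq j) hbound
  rcases eq_or_lt_of_le hSnn with h | h
  · rw [← h]; have := hC j; linarith
  · nlinarith
end

section
/- Consider n unit-time jobs scheduled consecutively on one machine (job in position i completes at time i). For a permutation π of [n] and due dates d : [n] → ℕ, job j is late if its completion time exceeds d(j). Suppose the job set consists of pairs {J_j, J'_j} for j = 1,...,n', with 2n' jobs total, and under every scenario the due dates of J_j and J'_j both lie in {2j-1, 2j}. If a permutation π does not place, for every j, the jobs {J_j, J'_j} in positions 2j-1 and 2j, then under every scenario at least one job in π is late. -/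
/-!
If every job is placed before the end of its own block, then by counting the jobs of the
blocks before block `k` fill exactly the positions before block `k`, so every job sits inside
its own block. Hence a permutation not of block form puts some job of pair `j` at
position `≥ 2j + 2` (0-indexed), past both of its possible due dates.
-/

open Finset

theorem le_apply_of_forall_mem_lt_of_card_eq {α : Type*} [DecidableEq α] {f : α → ℕ}
    (hf : Function.Injective f) {s : Finset α} {m : ℕ} (hs : ∀ a ∈ s, f a < m)
    (hcard : #s = m) {x : α} (hx : x ∉ s) : m ≤ f x := by
  by_contra! hfx
  have hmaps : Set.MapsTo f (insert x s : Finset α) (range m) := by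
    intro a ha
    rcases mem_insert.mp ha with rfl | ha
    · exact mem_range.mpr hfx
    · exact mem_range.mpr (hs a ha)
  have := card_le_card_of_injOn f hmaps hf.injOn
  rw [card_insert_of_notMem hx, card_range] at this
  omega

theorem mul_le_apply_of_forall_apply_lt {n : ℕ} {β : Type*} [Fintype β] [DecidableEq β]
    {f : Fin n × β → ℕ} (hf : Function.Injective f)
    (hlt : ∀ j, f j < Fintype.card β * ((j.1 : ℕ) + 1)) (j : Fin n × β) :
    Fintype.card β * (j.1 : ℕ) ≤ f j := by
  refine le_apply_of_forall_mem_lt_of_card_eq hf (s := Iio j.1 ×ˢ univ) ?_ ?_ ?_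
  · rintro a ha
    have ha1 : a.1 < j.1 := mem_Iio.mp (mem_product.mp ha).1
    calc f a < Fintype.card β * ((a.1 : ℕ) + 1) := hlt a
      _ ≤ Fintype.card β * (j.1 : ℕ) := Nat.mul_le_mul_left _ ha1
  · rw [card_product, Fin.card_Iio, card_univ, mul_comm]
  · simp

/-- Positions are 0-indexed: the job in position `i` completes at time `i + 1`, and the due
dates of pair `j` lie in `{2j+1, 2j+2}`. -/
theorem stmt14 (n' : ℕ) (Ξ : Type)
    (π : (Fin n' × Bool) ≃ Fin (2 * n'))
    (d : Ξ → (Fin n' × Bool) → ℕ)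
    (hd : ∀ ξ j, d ξ j = 2 * (j.1 : ℕ) + 1 ∨ d ξ j = 2 * (j.1 : ℕ) + 2)
    (hnotblock : ¬ ∀ j : Fin n' × Bool,
      (π j : ℕ) = 2 * (j.1 : ℕ) ∨ (π j : ℕ) = 2 * (j.1 : ℕ) + 1) :
    ∀ ξ : Ξ, ∃ j : Fin n' × Bool, d ξ j < (π j : ℕ) + 1 := by
  have hinj : Function.Injective fun j => (π j : ℕ) :=
    Fin.val_injective.comp π.injective
  obtain ⟨j, hj⟩ : ∃ j : Fin n' × Bool, 2 * (j.1 : ℕ) + 2 ≤ π j := by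
    by_contra! hearly
    refine hnotblock fun j => ?_
    have hj_early := hearly j
    have hblock := mul_le_apply_of_forall_apply_lt hinj
      (fun j => by rw [Fintype.card_bool]; linarith [hearly j]) j
    rw [Fintype.card_bool] at hblock
    omega
  intro ξ
  exact ⟨j, by rcases hd ξ j with h | h <;> omega⟩
end

section
/- Consider n items where item j has cost c_j(ξ_i) ∈ {0,1} under each of K scenarios, and the selection problem of choosing exactly q items minimizing the maximum scenario cost. Map this to a scheduling instance with n unit-time jobs and due dates d_j(ξ'_i) = n - q if c_j(ξ_i) = 1 and d_j(ξ'_i) = n otherwise. Then there exists a selection X of q items with max_i Σ_{e_j ∈ X} c_j(ξ_i) ≤ C (for some C ≤ q) if and only if there exists a permutation of the jobs in which at most C jobs are late under each due-date scenario, where a unit-time job in position i is late under scenario ξ'_i iff i > d_j(ξ'_i). -/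
/-!
A job of cost 0 has due date `n` and is never late; a job of cost 1 has due date `n - q` and is
late exactly when it sits in one of the last `q` positions. So a schedule `σ` corresponds to the
selection `X` of jobs it places in the last `q` positions, and its late jobs under scenario `i`
are the items of `X` of cost 1 in scenario `i`, whose number is the cost of `X`.
-/

open Finset

theorem Finset.exists_perm_map_eq_of_card_eq {α : Type*} [Fintype α] [DecidableEq α]
    {s t : Finset α} (h : #s = #t) : ∃ σ : Equiv.Perm α, s.map σ.toEmbedding = t := by
  let σ := (s.equivOfCardEq h).extendSubtype
  refine ⟨σ, eq_of_subset_of_card_le (fun y hy => ?_) (by rw [card_map, h])⟩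
  obtain ⟨x, hx, rfl⟩ := mem_map.1 hy
  exact Equiv.extendSubtype_mem _ x hx

theorem Finset.sum_eq_card_filter_eq_one {ι : Type*} {s : Finset ι} {f : ι → ℕ}
    (hf : ∀ i ∈ s, f i ≤ 1) : ∑ i ∈ s, f i = #{i ∈ s | f i = 1} := by
  rw [card_filter]
  refine sum_congr rfl fun i hi => ?_
  have := hf i hi
  split_ifs <;> omega

def lastPositions (n q : ℕ) : Finset (Fin n) := {k | n - q ≤ (k : ℕ)}

theorem card_lastPositions {n q : ℕ} (hq : q ≤ n) : #(lastPositions n q) = q := by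
  have h := card_filter_add_card_filter_not (s := (univ : Finset (Fin n)))
    (fun k => (k : ℕ) < n - q)
  rw [Fin.card_filter_val_lt, card_univ, Fintype.card_fin] at h
  simp only [not_lt] at h
  unfold lastPositions
  omega

theorem lt_dueDate_iff {n q c : ℕ} (k : Fin n) :
    (if c = 1 then n - q else n) < (k : ℕ) + 1 ↔ c = 1 ∧ k ∈ lastPositions n q := by
  simp only [lastPositions, mem_filter, mem_univ, true_and]
  have := k.isLt
  split_ifs <;> omega

theorem stmt18_general (n K q C : ℕ) (hq : q ≤ n)
    (c : Fin K → Fin n → ℕ) (hc : ∀ i j, c i j ≤ 1) :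
    (∃ X : Finset (Fin n), X.card = q ∧ ∀ i, (∑ j ∈ X, c i j) ≤ C) ↔
    (∃ σ : Equiv.Perm (Fin n), ∀ i,
      (Finset.univ.filter (fun j =>
        (if c i j = 1 then n - q else n) < (σ j : ℕ) + 1)).card ≤ C) := by
  have late_eq : ∀ (σ : Equiv.Perm (Fin n)) i,
      univ.filter (fun j => (if c i j = 1 then n - q else n) < (σ j : ℕ) + 1)
        = {j ∈ (lastPositions n q).map σ.symm.toEmbedding | c i j = 1} := by
    intro σ i
    ext j
    simp only [mem_filter, mem_univ, true_and, mem_map_equiv, Equiv.symm_symm, lt_dueDate_iff]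
    exact and_comm
  simp only [late_eq, ← sum_eq_card_filter_eq_one fun j _ => hc _ j]
  constructor
  · rintro ⟨X, hX, hXC⟩
    obtain ⟨τ, hτ⟩ := exists_perm_map_eq_of_card_eq ((card_lastPositions hq).trans hX.symm)
    exact ⟨τ.symm, by simpa [hτ] using hXC⟩
  · rintro ⟨σ, hσ⟩
    exact ⟨_, by rw [card_map, card_lastPositions hq], hσ⟩

/-- Cost-preserving reduction from Min-Max 0-1 Selection to
Min-Max `1|p_j=1|∑ U_j` with due-date scenarios: due date `n-q` if the item
cost is 1, and `n` otherwise. Job `j` in position `σ j` (0-indexed) completes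
at time `σ j + 1` and is late iff its completion time exceeds its due date. -/
theorem stmt18 (n K q C : ℕ) (hq : q ≤ n) (hC : C ≤ q)
    (c : Fin K → Fin n → ℕ) (hc : ∀ i j, c i j ≤ 1) :
    (∃ X : Finset (Fin n), X.card = q ∧ ∀ i, (∑ j ∈ X, c i j) ≤ C) ↔
    (∃ σ : Equiv.Perm (Fin n), ∀ i,
      (Finset.univ.filter (fun j =>
        (if c i j = 1 then n - q else n) < (σ j : ℕ) + 1)).card ≤ C) :=
  stmt18_general n K q C hq c hc
end
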